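/- For the Heaviside function H, the star product satisfies H ⋆ H = H, and differentiating via the Leibniz rule is consistent: δ ⋆ H + H ⋆ δ = δ, where δ ⋆ H = δ and H ⋆ δ = 0. -/
import Mathlib


noncomputable section
open MeasureTheory Filter Set

/-- `t` is a test function: infinitely smooth with compact support. -/
def IsTest (t : ℝ → ℂ) : Prop := ContDiff ℝ (⊤ : ℕ∞) t ∧ HasCompactSupport t

/-- Action of the singular distribution `∑ m, C m • δ^{(m)}(· - w)` on `t`:
`∑ m, C m * (-1)^m * t^{(m)}(w)`. -/
def deltaAct (C : ℕ →₀ ℂ) (w : ℝ) (t : ℝ → ℂ) : ℂ :=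
  C.sum fun m c => c * ((-1 : ℂ) ^ m * iteratedDeriv m t w)

/-- Coefficients of the product of a smooth function `h` with
`∑ m, C m • δ^{(m)}(· - w)`, by the Leibniz expansion
`h·δ^{(m)}(·-w) = ∑_{k≤m} (-1)^k (m choose k) h^{(k)}(w) δ^{(m-k)}(·-w)`. -/
def mulCoef (h : ℝ → ℂ) (w : ℝ) (C : ℕ →₀ ℂ) : ℕ →₀ ℂ :=
  C.sum fun m c => ∑ k ∈ Finset.range (m + 1),
    Finsupp.single (m - k) (c * ((-1 : ℂ) ^ k * (m.choose k : ℂ) * iteratedDeriv k h w))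

/-- The open interval `I_i` determined by the points `x 0 < x 1 < ... < x (N-1)`:
`I_0 = (-∞, x 0)`, `I_i = (x (i-1), x i)`, `I_N = (x (N-1), ∞)`. -/
def seg {N : ℕ} (x : Fin N → ℝ) (i : Fin (N + 1)) : Set ℝ :=
  {y | ∀ j : Fin N, ((j : ℕ) < (i : ℕ) → x j < y) ∧ ((i : ℕ) ≤ (j : ℕ) → y < x j)}

/-- The piecewise function `∑ i, χ_{I_i} · p i` built from the pieces `p i`. -/
def pwFun {N : ℕ} (x : Fin N → ℝ) (p : Fin (N + 1) → ℝ → ℂ) (y : ℝ) : ℂ :=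
  ∑ i : Fin (N + 1), Set.indicator (seg x i) (p i) y

/-- Data of an element `F = f + ∑_k Δ^{(F)}_{x_k}` of `𝒜(ℝ)` with singular set
`{x 0 < ... < x (N-1)}`: the smooth pieces `f_i` of the piecewise smooth regular part,
and for each `k` the coefficients of the delta part `Δ^{(F)}_{x_k}`. -/
structure AElt (N : ℕ) where
  piece : Fin (N + 1) → ℝ → ℂ
  dcoef : Fin N → ℕ →₀ ℂ

/-- All pieces are globally smooth. -/
def SmoothPieces {N : ℕ} (F : AElt N) : Prop := ∀ i, ContDiff ℝ (⊤ : ℕ∞) (F.piece i)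

instance {N : ℕ} : Add (AElt N) :=
  ⟨fun F G => ⟨fun i y => F.piece i y + G.piece i y, fun k => F.dcoef k + G.dcoef k⟩⟩
instance {N : ℕ} : Neg (AElt N) :=
  ⟨fun F => ⟨fun i y => -F.piece i y, fun k => -F.dcoef k⟩⟩
instance {N : ℕ} : Sub (AElt N) := ⟨fun F G => F + -G⟩
instance {N : ℕ} : SMul ℂ (AElt N) :=
  ⟨fun c F => ⟨fun i y => c * F.piece i y, fun k => c • F.dcoef k⟩⟩

/-- Action of an element of `𝒜(ℝ)` on a test function `t`:
`⟪F, t⟫ = ∫ f t + ∑_k ⟪Δ^{(F)}_{x_k}, t⟫`. -/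
def elAct {N : ℕ} (x : Fin N → ℝ) (F : AElt N) (t : ℝ → ℂ) : ℂ :=
  (∫ y, pwFun x F.piece y * t y) + ∑ k : Fin N, deltaAct (F.dcoef k) (x k) t

/-- The star product `F ⋆ G = fg + ∑_k [ g_k Δ^{(F)}_{x_k} + f_{k-1} Δ^{(G)}_{x_k} ]`:
pieces multiply pointwise, and at `x_k` the delta part of `F` is multiplied by the
right-hand piece `g k.succ` of `g` and the delta part of `G` by the left-hand
piece `f k.castSucc` of `f`. -/
def starE {N : ℕ} (x : Fin N → ℝ) (F G : AElt N) : AElt N where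
  piece := fun i y => F.piece i y * G.piece i y
  dcoef := fun k => mulCoef (G.piece k.succ) (x k) (F.dcoef k)
    + mulCoef (F.piece k.castSucc) (x k) (G.dcoef k)

/-- Distributional derivative at the level of the data: differentiate the pieces,
add the jump deltas, and raise the order of the existing delta part. -/
def derivE {N : ℕ} (x : Fin N → ℝ) (F : AElt N) : AElt N where
  piece := fun i y => deriv (F.piece i) y
  dcoef := fun k => Finsupp.mapDomain (· + 1) (F.dcoef k)
    + Finsupp.single 0 (F.piece k.succ (x k) - F.piece k.castSucc (x k))

end

/-- The Heaviside function `H` as an element of `𝒜(ℝ)` with singular point `0`: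
left piece `0`, right piece `1`, no delta part. -/
noncomputable def Hel : AElt 1 := ⟨fun i _ => ((i : ℕ) : ℂ), 0⟩

/-- The Dirac delta `δ` at `0` as an element of `𝒜(ℝ)`. -/
noncomputable def delEl : AElt 1 := ⟨fun _ _ => 0, fun _ => Finsupp.single 0 1⟩

/-- the singular point of `H` and `δ` -/
def x₀ : Fin 1 → ℝ := fun _ => 0

lemma mulCoef_zero (h : ℝ → ℂ) (w : ℝ) : mulCoef h w 0 = 0 := by
  simp [mulCoef]

lemma mulCoef_single0 (h : ℝ → ℂ) (w : ℝ) :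
    mulCoef h w (Finsupp.single 0 1) = Finsupp.single 0 (h w) := by
  rw [mulCoef, Finsupp.sum_single_index]
  · rw [Finset.sum_range_one]; simp [iteratedDeriv_zero]
  · simp

lemma deltaAct_zero (w : ℝ) (t : ℝ → ℂ) : deltaAct 0 w t = 0 := by
  simp [deltaAct]

lemma deltaAct_single0 (c : ℂ) (w : ℝ) (t : ℝ → ℂ) :
    deltaAct (Finsupp.single 0 c) w t = c * t w := by
  simp [deltaAct, Finsupp.sum_single_index]

/-- for the Heaviside function `H`, `H ⋆ H = H`, and differentiating via
the Leibniz rule is consistent: `δ ⋆ H = δ`, `H ⋆ δ = 0`, and `δ ⋆ H + H ⋆ δ = δ`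
(all as distributions). -/
theorem stmt13 (t : ℝ → ℂ) (ht : IsTest t) :
    elAct x₀ (starE x₀ Hel Hel) t = elAct x₀ Hel t
    ∧ elAct x₀ (starE x₀ delEl Hel) t = elAct x₀ delEl t
    ∧ elAct x₀ (starE x₀ Hel delEl) t = 0
    ∧ elAct x₀ (starE x₀ delEl Hel) t + elAct x₀ (starE x₀ Hel delEl) t
        = elAct x₀ delEl t := by
  have hzero : ∀ (p : Fin 2 → ℝ → ℂ), (∀ i y, p i y = 0) →
      (∫ y, pwFun x₀ p y * t y) = 0 := by
    intro p hp
    have : ∀ y, pwFun x₀ p y * t y = 0 := by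
      intro y
      have : pwFun x₀ p y = 0 := by
        unfold pwFun
        refine Finset.sum_eq_zero fun i _ => ?_
        simp [Set.indicator_apply, hp]
      rw [this, zero_mul]
    simp [this]
  have hHel0 : ∀ k : Fin 1, Hel.dcoef k = 0 := by intro k; simp [Hel]
  have h1 : elAct x₀ (starE x₀ Hel Hel) t = elAct x₀ Hel t := by
    unfold elAct
    have hp : (starE x₀ Hel Hel).piece = Hel.piece := by
      funext i y
      show Hel.piece i y * Hel.piece i y = Hel.piece i y
      fin_cases i <;> simp [Hel]
    have hd : (starE x₀ Hel Hel).dcoef = Hel.dcoef := by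
      funext k
      show mulCoef _ _ (Hel.dcoef k) + mulCoef _ _ (Hel.dcoef k) = Hel.dcoef k
      rw [hHel0, mulCoef_zero, mulCoef_zero, add_zero]
    rw [hp, hd]
  have h2 : elAct x₀ (starE x₀ delEl Hel) t = elAct x₀ delEl t := by
    unfold elAct
    have hi1 : (∫ y, pwFun x₀ (starE x₀ delEl Hel).piece y * t y) = 0 := by
      apply hzero; intro i y
      show delEl.piece i y * Hel.piece i y = 0
      simp [delEl]
    have hi2 : (∫ y, pwFun x₀ delEl.piece y * t y) = 0 := by
      apply hzero; intro i y; simp [delEl]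
    rw [hi1, hi2]
    congr 1
    refine Finset.sum_congr rfl fun k _ => ?_
    show deltaAct (mulCoef (Hel.piece k.succ) (x₀ k) (delEl.dcoef k)
        + mulCoef (delEl.piece k.castSucc) (x₀ k) (Hel.dcoef k)) _ t = _
    rw [hHel0, mulCoef_zero, add_zero]
    show deltaAct (mulCoef (Hel.piece k.succ) (x₀ k) (Finsupp.single 0 1)) _ t = _
    rw [mulCoef_single0]
    have : Hel.piece k.succ (x₀ k) = 1 := by
      show ((k.succ : ℕ) : ℂ) = 1
      fin_cases k; simp
    rw [this]
    rfl
  have h3 : elAct x₀ (starE x₀ Hel delEl) t = 0 := by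
    unfold elAct
    have hi1 : (∫ y, pwFun x₀ (starE x₀ Hel delEl).piece y * t y) = 0 := by
      apply hzero; intro i y
      show Hel.piece i y * delEl.piece i y = 0
      simp [delEl]
    rw [hi1, zero_add]
    refine Finset.sum_eq_zero fun k _ => ?_
    show deltaAct (mulCoef (delEl.piece k.succ) (x₀ k) (Hel.dcoef k)
        + mulCoef (Hel.piece k.castSucc) (x₀ k) (delEl.dcoef k)) _ t = 0
    rw [hHel0, mulCoef_zero, zero_add]
    show deltaAct (mulCoef (Hel.piece k.castSucc) (x₀ k) (Finsupp.single 0 1)) _ t = 0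
    rw [mulCoef_single0]
    have : Hel.piece k.castSucc (x₀ k) = 0 := by
      show ((k.castSucc : ℕ) : ℂ) = 0
      fin_cases k; simp
    rw [this, deltaAct_single0, zero_mul]
  exact ⟨h1, h2, h3, by rw [h2, h3, add_zero]⟩
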